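/- arXiv:2511.12513 — 7 statements merged into one kernel-verified Lean document; each statement's English description precedes it below -/
import Mathlib

section
/- If u = A + B√D with D > 1 squarefree and odd, A² - B²D a perfect cube, gcd(A,B) not divisible by the cube of a prime, and 2 divides gcd(A, B/C) (where C is the product of distinct odd primes dividing gcd(A,B) but not D), then v_2(A) = v_2(B/C) ≤ 2, with v_2(A) ≤ 1 when D ≡ 3 (mod 4). -/
/-- `Cval A B D` is the product of the distinct odd primes that divide `gcd(A, B)`
but do not divide `D`. -/
def Cval (A B D : ℤ) : ℤ :=
  ∏ q ∈ (Int.gcd A B).primeFactors.filter (fun q : ℕ => Odd q ∧ ¬ ((q : ℤ) ∣ D)), (q : ℤ)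

private lemma Cval_natCast (A B D : ℤ) :
    Cval A B D = ((∏ q ∈ (Int.gcd A B).primeFactors.filter
      (fun q : ℕ => Odd q ∧ ¬ ((q : ℤ) ∣ D)), q : ℕ) : ℤ) := by
  rw [Cval]; push_cast; rfl

private lemma Cval_odd (A B D : ℤ) : Odd (Cval A B D) := by
  rw [Cval_natCast, Int.odd_coe_nat, Nat.odd_iff]
  by_contra h
  have h2 : 2 ∣ ∏ q ∈ (Int.gcd A B).primeFactors.filter
      (fun q : ℕ => Odd q ∧ ¬ ((q : ℤ) ∣ D)), q := by omega
  obtain ⟨q, hq, hdvd⟩ := (Nat.prime_two).prime.exists_mem_finset_dvd h2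
  rw [Finset.mem_filter] at hq
  have hodd := hq.2.1
  rw [Nat.odd_iff] at hodd
  omega

private lemma Cval_dvd (A B D : ℤ) : Cval A B D ∣ B := by
  rw [Cval_natCast]
  have h1 := Finset.prod_dvd_prod_of_subset
    ((Int.gcd A B).primeFactors.filter (fun q : ℕ => Odd q ∧ ¬ ((q : ℤ) ∣ D)))
    (Int.gcd A B).primeFactors (fun q => q) (Finset.filter_subset _ _)
  have h2 := Nat.prod_primeFactors_dvd (Int.gcd A B)
  exact (Int.natCast_dvd_natCast.mpr (h1.trans h2)).trans (Int.gcd_dvd_right A B)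

private lemma odd_ne_zero {m : ℤ} (hm : Odd m) : m ≠ 0 := by
  rintro rfl; simp [Int.odd_iff] at hm

private lemma decomp2 (z : ℤ) (hz : z ≠ 0) : ∃ (k : ℕ) (m : ℤ), Odd m ∧ z = 2 ^ k * m := by
  obtain ⟨k, m, hm, hzm⟩ : ∃ (k : ℕ) (m : ℕ), ¬ 2 ∣ m ∧ z.natAbs = 2 ^ k * m := by
    have h : z.natAbs ≠ 0 := Int.natAbs_ne_zero.mpr hz
    exact ⟨z.natAbs.factorization 2, z.natAbs / 2 ^ (z.natAbs.factorization 2),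
      Nat.not_dvd_ordCompl Nat.prime_two h,
      (Nat.ordProj_mul_ordCompl_eq_self _ 2).symm⟩
  have hmo : Odd (m : ℤ) := by
    rw [Int.odd_coe_nat, Nat.odd_iff]; omega
  rcases Int.natAbs_eq z with h | h
  · exact ⟨k, m, hmo, by rw [h, hzm]; push_cast; ring⟩
  · exact ⟨k, -m, hmo.neg, by rw [h, hzm]; push_cast; ring⟩

private lemma val2_decomp (k : ℕ) (m : ℤ) (hm : Odd m) :
    padicValInt 2 (2 ^ k * m) = k := by
  haveI : Fact (Nat.Prime 2) := ⟨Nat.prime_two⟩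
  have hm0 : m.natAbs ≠ 0 := Int.natAbs_ne_zero.mpr (odd_ne_zero hm)
  have hnd : ¬ (2 ∣ m.natAbs) := by
    have := Int.natAbs_odd.mpr hm
    rw [Nat.odd_iff] at this; omega
  unfold padicValInt
  rw [Int.natAbs_mul, Int.natAbs_pow, show (2:ℤ).natAbs = 2 from rfl,
    padicValNat.mul (by positivity) hm0, padicValNat.prime_pow,
    padicValNat.eq_zero_of_not_dvd hnd, add_zero]

private lemma exp_eq {j k : ℕ} {x y : ℤ} (hx : Odd x) (hy : Odd y)
    (h : 2 ^ j * x = 2 ^ k * y) : j = k := by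
  have h1 := val2_decomp j x hx
  rw [h, val2_decomp k y hy] at h1
  omega

private lemma not_sq {D : ℤ} (hD : 1 < D) (hsq : Squarefree D) {x y : ℤ} (hy : y ≠ 0) :
    x ^ 2 ≠ y ^ 2 * D := by
  intro h
  have hdvd : y ∣ x := (Int.pow_dvd_pow_iff two_ne_zero).mp ⟨D, h⟩
  obtain ⟨z, rfl⟩ := hdvd
  have hz : D = z ^ 2 := by
    have h2 : y ^ 2 * z ^ 2 = y ^ 2 * D := by rw [← h]; ring
    exact (mul_left_cancel₀ (pow_ne_zero 2 hy) h2).symm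
  have : IsUnit z := hsq z ⟨1, by rw [hz]; ring⟩
  rcases Int.isUnit_iff.mp this with rfl | rfl <;> simp [hz] at hD

/-- If `u = A + B√D` with `D > 1` squarefree and odd, `A² - B²D` a perfect cube,
`gcd(A, B)` not divisible by the cube of a prime, and `2` divides `gcd(A, B/C)`
(where `C = Cval A B D`), then `v_2(A) = v_2(B/C) ≤ 2`, with `v_2(A) ≤ 1` when
`D ≡ 3 (mod 4)`. -/
theorem stmt_2 (D A B : ℤ) (hD : 1 < D) (hsq : Squarefree D) (hodd : Odd D)
    (hcube : ∃ n : ℤ, A ^ 2 - B ^ 2 * D = n ^ 3)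
    (hgcd : ∀ p : ℕ, p.Prime → ¬ (p ^ 3 ∣ Int.gcd A B))
    (h2A : (2 : ℤ) ∣ A) (h2B : (2 : ℤ) ∣ B / Cval A B D) :
    padicValInt 2 A = padicValInt 2 (B / Cval A B D) ∧ padicValInt 2 A ≤ 2 ∧
      (D % 4 = 3 → padicValInt 2 A ≤ 1) := by
  set C := Cval A B D with hCdef
  have hCodd : Odd C := Cval_odd A B D
  have hCB : C * (B / C) = B := Int.mul_ediv_cancel' (Cval_dvd A B D)
  have H8 : ¬ ((2:ℤ)^3 ∣ A ∧ (2:ℤ)^3 ∣ B) := by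
    rintro ⟨hA, hB⟩
    have h := Int.dvd_coe_gcd hA hB
    rw [show ((2:ℤ)^3) = ((2^3:ℕ):ℤ) by norm_num] at h
    exact hgcd 2 Nat.prime_two (Int.natCast_dvd_natCast.mp h)
  obtain ⟨n, hn⟩ := hcube
  by_cases hA0 : A = 0
  · exfalso
    by_cases hB0 : B = 0
    · exact hgcd 2 Nat.prime_two (by simp [hA0, hB0])
    · have hB2ne : B / C ≠ 0 := fun h => hB0 (by rw [← hCB, h, mul_zero])
      obtain ⟨b, B₂', hB₂', hB₂⟩ := decomp2 (B / C) hB2ne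
      have hW : Odd (C * B₂') := hCodd.mul hB₂'
      have hB : B = 2 ^ b * (C * B₂') := by rw [← hCB, hB₂]; ring
      have hb1 : 1 ≤ b := by
        rcases Nat.eq_zero_or_pos b with rfl | h
        · rw [pow_zero, one_mul] at hB₂
          rw [hB₂] at h2B
          have := Int.odd_iff.mp hB₂'; omega
        · exact h
      have hn0 : n ≠ 0 := by
        rintro rfl
        have h1 : B ^ 2 * D = 0 := by rw [hA0] at hn; linear_combination -hn
        exact (mul_ne_zero (pow_ne_zero 2 hB0) (by omega)) h1
      obtain ⟨c, n', hn', hnd⟩ := decomp2 n hn0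
      have key : 2 ^ (3*c) * n' ^ 3 = 2 ^ (2*b) * (-((C * B₂') ^ 2 * D)) := by
        rw [hA0, hB, hnd] at hn; linear_combination -hn
      have h23 := exp_eq hn'.pow ((hW.pow.mul hodd).neg) key
      have hb3 : 3 ≤ b := by omega
      exact H8 ⟨hA0 ▸ dvd_zero _, (pow_dvd_pow 2 hb3).trans ⟨C * B₂', hB⟩⟩
  · by_cases hB0 : B = 0
    · exfalso
      obtain ⟨a, A', hA', hA⟩ := decomp2 A hA0
      have ha1 : 1 ≤ a := by
        rcases Nat.eq_zero_or_pos a with rfl | h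
        · rw [pow_zero, one_mul] at hA
          rw [hA] at h2A
          have := Int.odd_iff.mp hA'; omega
        · exact h
      have hn0 : n ≠ 0 := by
        rintro rfl
        have h1 : A ^ 2 = 0 := by rw [hB0] at hn; linear_combination hn
        exact hA0 (pow_eq_zero_iff two_ne_zero |>.mp h1)
      obtain ⟨c, n', hn', hnd⟩ := decomp2 n hn0
      have key : 2 ^ (2*a) * A' ^ 2 = 2 ^ (3*c) * n' ^ 3 := by
        rw [hB0, hA, hnd] at hn; linear_combination hn
      have h23 := exp_eq hA'.pow hn'.pow key
      have ha3 : 3 ≤ a := by omega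
      exact H8 ⟨(pow_dvd_pow 2 ha3).trans ⟨A', hA⟩, hB0 ▸ dvd_zero _⟩
    · -- main case
      have hB2ne : B / C ≠ 0 := fun h => hB0 (by rw [← hCB, h, mul_zero])
      obtain ⟨a, A', hA', hA⟩ := decomp2 A hA0
      obtain ⟨b, B₂', hB₂', hB₂⟩ := decomp2 (B / C) hB2ne
      have hW : Odd (C * B₂') := hCodd.mul hB₂'
      have hB : B = 2 ^ b * (C * B₂') := by rw [← hCB, hB₂]; ring
      have ha1 : 1 ≤ a := by
        rcases Nat.eq_zero_or_pos a with rfl | h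
        · rw [pow_zero, one_mul] at hA
          rw [hA] at h2A
          have := Int.odd_iff.mp hA'; omega
        · exact h
      have hb1 : 1 ≤ b := by
        rcases Nat.eq_zero_or_pos b with rfl | h
        · rw [pow_zero, one_mul] at hB₂
          rw [hB₂] at h2B
          have := Int.odd_iff.mp hB₂'; omega
        · exact h
      have hn0 : n ≠ 0 := by
        rintro rfl
        have h1 : A ^ 2 = B ^ 2 * D := by linear_combination hn
        exact not_sq hD hsq hB0 h1
      obtain ⟨c, n', hn', hnd⟩ := decomp2 n hn0
      have hmin : a ≤ 2 ∨ b ≤ 2 := by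
        by_contra h
        push_neg at h
        exact H8 ⟨(pow_dvd_pow 2 (by omega : 3 ≤ a)).trans ⟨A', hA⟩,
          (pow_dvd_pow 2 (by omega : 3 ≤ b)).trans ⟨C * B₂', hB⟩⟩
      have hab : a = b := by
        rcases lt_trichotomy a b with h | h | h
        · exfalso
          obtain ⟨d, hd, hd1⟩ : ∃ d, b = a + d ∧ 1 ≤ d := ⟨b - a, by omega, by omega⟩
          have hM : Odd (A' ^ 2 - 2 ^ (2*d) * ((C * B₂') ^ 2 * D)) :=
            hA'.pow.sub_even ((Int.even_pow.mpr ⟨even_two, by omega⟩).mul_right _)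
          have key : 2 ^ (2*a) * (A' ^ 2 - 2 ^ (2*d) * ((C * B₂') ^ 2 * D))
              = 2 ^ (3*c) * n' ^ 3 := by
            rw [hA, hB, hnd, hd] at hn; linear_combination hn
          have h23 := exp_eq hM hn'.pow key
          rcases hmin with h2 | h2 <;> omega
        · exact h
        · exfalso
          obtain ⟨d, hd, hd1⟩ : ∃ d, a = b + d ∧ 1 ≤ d := ⟨a - b, by omega, by omega⟩
          have hM : Odd (2 ^ (2*d) * A' ^ 2 - (C * B₂') ^ 2 * D) :=
            ((Int.even_pow.mpr ⟨even_two, by omega⟩).mul_right _).sub_odd (hW.pow.mul hodd)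
          have key : 2 ^ (2*b) * (2 ^ (2*d) * A' ^ 2 - (C * B₂') ^ 2 * D)
              = 2 ^ (3*c) * n' ^ 3 := by
            rw [hA, hB, hnd, hd] at hn; linear_combination hn
          have h23 := exp_eq hM hn'.pow key
          rcases hmin with h2 | h2 <;> omega
      subst hab
      have ha2 : a ≤ 2 := by rcases hmin with h | h <;> omega
      have hMne : A' ^ 2 - (C * B₂') ^ 2 * D ≠ 0 := by
        intro h
        have h1 : A' ^ 2 = (C * B₂') ^ 2 * D := by linarith
        exact not_sq hD hsq (odd_ne_zero hW) h1
      obtain ⟨e, M₀, hM₀, hM⟩ := decomp2 _ hMne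
      have key : 2 ^ (2*a + e) * M₀ = 2 ^ (3*c) * n' ^ 3 := by
        rw [hA, hB, hnd] at hn
        linear_combination hn - (2:ℤ) ^ (2*a) * hM
      have hval := exp_eq hM₀ hn'.pow key
      have e1 : padicValInt 2 A = a := by rw [hA]; exact val2_decomp _ _ hA'
      have e2 : padicValInt 2 (B / C) = a := by rw [hB₂]; exact val2_decomp _ _ hB₂'
      refine ⟨by rw [e1, e2], by rw [e1]; exact ha2, fun hD4 => ?_⟩
      rw [e1]
      have hA'sq : A' ^ 2 % 4 = 1 := by
        obtain ⟨k, hk⟩ := hA'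
        have : A' ^ 2 = 4 * (k*k+k) + 1 := by rw [hk]; ring
        omega
      have hWsq : (C * B₂') ^ 2 % 4 = 1 := by
        obtain ⟨k, hk⟩ := hW
        have : (C * B₂') ^ 2 = 4 * (k*k+k) + 1 := by rw [hk]; ring
        omega
      have hWD : ((C * B₂') ^ 2 * D) % 4 = 3 := by
        obtain ⟨s, hs⟩ : ∃ s, (C * B₂') ^ 2 = 4 * s + 1 := ⟨(C * B₂') ^ 2 / 4, by omega⟩
        have : (C * B₂') ^ 2 * D = 4 * (s * D) + D := by rw [hs]; ring
        omega
      have hM4 : (A' ^ 2 - (C * B₂') ^ 2 * D) % 4 = 2 := by omega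
      have he : e = 1 := by
        rcases e with _ | _ | e
        · exfalso
          rw [pow_zero, one_mul] at hM
          have := Int.odd_iff.mp hM₀
          omega
        · rfl
        · exfalso
          have h4 : A' ^ 2 - (C * B₂') ^ 2 * D = 4 * (2 ^ e * M₀) := by
            rw [hM]; ring
          omega
      omega
end

section
/- For u = 6 + 3√7, the norm N(u) = 6² - 9·7 = -27 is a perfect cube, and u is not a cube in the ring of integers of ℚ(√7). -/
/-! The imaginary part of `(a + b√d)³` is `b (3a² + d b²)`. For `d > 0` this is either `0` or at
least `d` in absolute value, since `b ≠ 0` forces `|b| ≥ 1` and `3a² + d b² ≥ d`. With `d = 7` the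
value `3` is therefore not attained, so `6 + 3√7` is not a cube. -/

namespace Zsqrtd

variable {d : ℤ}

theorem im_pow_three (v : ℤ√d) : (v ^ 3).im = v.im * (3 * v.re ^ 2 + d * v.im ^ 2) := by
  simp only [pow_succ, pow_zero, one_mul, im_mul, re_mul]
  ring

theorem le_abs_im_pow_three (hd : 0 < d) {v : ℤ√d} (hv : (v ^ 3).im ≠ 0) :
    d ≤ |(v ^ 3).im| := by
  have him : v.im ≠ 0 := fun h => hv (by rw [im_pow_three, h, zero_mul])
  have one_le_abs : 1 ≤ |v.im| := Int.one_le_abs him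
  have one_le_sq : 1 ≤ v.im ^ 2 := by nlinarith [sq_abs v.im]
  have d_le : d ≤ 3 * v.re ^ 2 + d * v.im ^ 2 := by
    nlinarith [mul_le_mul_of_nonneg_left one_le_sq hd.le, sq_nonneg v.re]
  rw [im_pow_three, abs_mul, abs_of_pos (hd.trans_le d_le)]
  nlinarith

end Zsqrtd

/-- For `u = 6 + 3√7 ∈ ℤ[√7]` (the ring of integers of `ℚ(√7)`), the norm
`N(u) = 6² - 9·7 = -27` is a perfect cube, and `u` is not a cube in `ℤ[√7]`. -/
theorem stmt_8 :
    Zsqrtd.norm (⟨6, 3⟩ : ℤ√7) = (-3) ^ 3 ∧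
      ¬ ∃ v : ℤ√7, v ^ 3 = (⟨6, 3⟩ : ℤ√7) := by
  refine ⟨by norm_num [Zsqrtd.norm], ?_⟩
  rintro ⟨v, hv⟩
  have him : (v ^ 3).im = 3 := by rw [hv]
  have seven_le := Zsqrtd.le_abs_im_pow_three (by norm_num) (v := v) (by rw [him]; norm_num)
  rw [him] at seven_le
  norm_num at seven_le
end

section
/- For integers m, n with gcd(n, 3m) = 1, the cubic residue symbol (m/n)₃ in the Eisenstein integers equals 1. -/
open Polynomial

noncomputable section

/-- The Eisenstein integers `ℤ[ω] = ℤ[X]/(X² + X + 1)`. -/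
abbrev Eis : Type := AdjoinRoot (X ^ 2 + X + 1 : ℤ[X])

/-- The primitive cube root of unity `ω` in `ℤ[ω]`. -/
noncomputable def eisω : Eis := AdjoinRoot.root _

/-- The norm `ℤ[ω] → ℤ`. -/
noncomputable def eisNorm : Eis →* ℤ := Algebra.norm ℤ

/-- A cubic residue symbol `χ β α = (β/α)₃` on the Eisenstein integers: it is
multiplicative in the denominator, equals `1` on unit denominators, and for an
Eisenstein prime `π ∤ 3` it is the unique value in `{1, ω, ω²}` congruent to
`β^{(N(π)-1)/3}` mod `π` (and `0` when `π ∣ β`). -/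
structure IsCubicSymbol (χ : Eis → Eis → Eis) : Prop where
  prime_value : ∀ β π : Eis, Prime π → ¬ π ∣ 3 → ¬ π ∣ β →
    χ β π ∈ ({1, eisω, eisω ^ 2} : Set Eis) ∧
      π ∣ (χ β π - β ^ (((eisNorm π).natAbs - 1) / 3))
  prime_zero : ∀ β π : Eis, Prime π → ¬ π ∣ 3 → π ∣ β → χ β π = 0
  unit_denom : ∀ β u : Eis, IsUnit u → χ β u = 1
  mul_denom : ∀ β π₁ π₂ : Eis, χ β (π₁ * π₂) = χ β π₁ * χ β π₂

/- For an Eisenstein prime `π ∤ 3m`, conjugation fixes `m` and `N(π)`, so it carries the defining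
congruence of `(m/π)₃` to that of `(m/π̄)₃`; as cube roots of unity are distinct mod `π̄`, this gives
`(m/π̄)₃ = conj (m/π)₃ = (m/π)₃⁻¹`. By multiplicativity `(m/α)₃ (m/ᾱ)₃ = 1` whenever `α` is coprime
to `3m`, and for the rational integer `α = n` this says `(m/n)₃² = 1`; since `(m/n)₃³ = 1` as well,
`(m/n)₃ = 1`. -/

theorem UniqueFactorizationMonoid.of_forall_prime_dvd {α : Type*} [CommMonoidWithZero α]
    [UniqueFactorizationMonoid α] {P : α → Prop} (hunit : ∀ u, IsUnit u → P u)
    (hmul : ∀ a b, P a → P b → P (a * b)) {x : α} (hx : x ≠ 0)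
    (hprime : ∀ p, Prime p → p ∣ x → P p) : P x := by
  suffices ∀ a, a ∣ x → P a from this x dvd_rfl
  refine fun a ↦ induction_on_prime a (fun h ↦ absurd (zero_dvd_iff.mp h) hx)
    (fun u hu _ ↦ hunit u hu) fun a p _ hp ih hpa ↦ ?_
  exact hmul p a (hprime p hp (dvd_of_mul_right_dvd hpa)) (ih (dvd_of_mul_left_dvd hpa))

namespace Eis

local notation "K" => CyclotomicField 3 ℚ

instance : IsCyclotomicExtension {3} ℚ K := CyclotomicField.isCyclotomicExtension 3 ℚ

theorem zeta_spec : IsPrimitiveRoot (IsCyclotomicExtension.zeta 3 ℚ K) 3 :=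
  IsCyclotomicExtension.zeta_spec 3 ℚ K

theorem minpoly_zeta : minpoly ℤ (IsCyclotomicExtension.zeta 3 ℚ K) = X ^ 2 + X + 1 := by
  refine (cyclotomic_eq_minpoly zeta_spec (by norm_num)).symm.trans ?_
  norm_num [cyclotomic_three]

def equivRingOfIntegers : Eis ≃ₐ[ℤ] NumberField.RingOfIntegers K :=
  (minpoly_zeta ▸ minpoly.equivAdjoin (zeta_spec.isIntegral (by norm_num))).trans
    zeta_spec.adjoinEquivRingOfIntegers

instance : IsDomain Eis :=
  equivRingOfIntegers.toRingEquiv.toMulEquiv.isDomain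

instance : CharZero Eis := equivRingOfIntegers.toRingEquiv.toRingHom.charZero

instance : IsPrincipalIdealRing Eis :=
  haveI := IsCyclotomicExtension.Rat.three_pid K
  IsPrincipalIdealRing.of_surjective equivRingOfIntegers.symm.toRingEquiv.toRingHom
    equivRingOfIntegers.symm.surjective

theorem eisω_sq_add_eisω_add_one : eisω ^ 2 + eisω + 1 = 0 := by
  have h := AdjoinRoot.mk_self (f := (X ^ 2 + X + 1 : ℤ[X]))
  rwa [map_add, map_add, map_pow, map_one, AdjoinRoot.mk_X] at h

theorem eisω_pow_three : eisω ^ 3 = 1 := by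
  linear_combination (eisω - 1) * eisω_sq_add_eisω_add_one

theorem aeval_eisω_sq : aeval (eisω ^ 2) (X ^ 2 + X + 1 : ℤ[X]) = 0 := by
  simp only [map_add, map_pow, map_one, aeval_X]
  linear_combination (eisω ^ 2 - eisω + 1) * eisω_sq_add_eisω_add_one

def conjHom : Eis →ₐ[ℤ] Eis := AdjoinRoot.liftAlgHom _ (Algebra.ofId ℤ Eis) _ aeval_eisω_sq

theorem conjHom_eisω : conjHom eisω = eisω ^ 2 := AdjoinRoot.liftAlgHom_root _ _ _ _

theorem conjHom_eisω_sq : conjHom (eisω ^ 2) = eisω := by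
  rw [map_pow, conjHom_eisω]
  linear_combination eisω * eisω_pow_three

theorem conjHom_comp_conjHom : conjHom.comp conjHom = AlgHom.id ℤ Eis :=
  AdjoinRoot.algHom_ext <| (congrArg conjHom conjHom_eisω).trans conjHom_eisω_sq

def conj : Eis ≃ₐ[ℤ] Eis :=
  AlgEquiv.ofAlgHom conjHom conjHom conjHom_comp_conjHom conjHom_comp_conjHom

theorem eisNorm_conj (x : Eis) : eisNorm (conj x) = eisNorm x :=
  Algebra.norm_eq_of_algEquiv conj x

theorem mem_cubeRoots_iff {a : Eis} :
    a ∈ ({1, eisω, eisω ^ 2} : Set Eis) ↔ a = 1 ∨ a = eisω ∨ a = eisω ^ 2 := Iff.rfl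

theorem mul_conj_of_mem {a : Eis} (ha : a ∈ ({1, eisω, eisω ^ 2} : Set Eis)) : a * conj a = 1 := by
  rcases mem_cubeRoots_iff.mp ha with rfl | rfl | rfl
  · simp
  · exact (congrArg _ conjHom_eisω).trans (by linear_combination eisω_pow_three)
  · exact (congrArg _ conjHom_eisω_sq).trans (by linear_combination eisω_pow_three)

theorem conj_mem {a : Eis} (ha : a ∈ ({1, eisω, eisω ^ 2} : Set Eis)) :
    conj a ∈ ({1, eisω, eisω ^ 2} : Set Eis) := by
  rcases mem_cubeRoots_iff.mp ha with rfl | rfl | rfl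
  · simp
  · exact Or.inr (Or.inr conjHom_eisω)
  · exact Or.inr (Or.inl conjHom_eisω_sq)

theorem sub_dvd_three_of_ne {a b : Eis} (ha : a ∈ ({1, eisω, eisω ^ 2} : Set Eis))
    (hb : b ∈ ({1, eisω, eisω ^ 2} : Set Eis)) (hab : a ≠ b) : a - b ∣ 3 := by
  have h := eisω_sq_add_eisω_add_one
  rcases mem_cubeRoots_iff.mp ha with rfl | rfl | rfl <;>
    rcases mem_cubeRoots_iff.mp hb with rfl | rfl | rfl
  all_goals first
    | exact absurd rfl hab
    | exact ⟨2 + eisω, by linear_combination h⟩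
    | exact ⟨-(2 + eisω), by linear_combination h⟩
    | exact ⟨1 - eisω, by linear_combination (2 - eisω) * h⟩
    | exact ⟨eisω - 1, by linear_combination (2 - eisω) * h⟩
    | exact ⟨eisω ^ 2 - eisω, by linear_combination (eisω ^ 2 - 3 * eisω + 3) * h⟩
    | exact ⟨eisω - eisω ^ 2, by linear_combination (eisω ^ 2 - 3 * eisω + 3) * h⟩

theorem eq_of_dvd_sub {π a b : Eis} (hπ : ¬ π ∣ 3) (ha : a ∈ ({1, eisω, eisω ^ 2} : Set Eis))
    (hb : b ∈ ({1, eisω, eisω ^ 2} : Set Eis)) (hab : π ∣ a - b) : a = b :=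
  by_contra fun hne ↦ hπ (hab.trans (sub_dvd_three_of_ne ha hb hne))

theorem pow_three_of_mem {a : Eis} (ha : a ∈ ({1, eisω, eisω ^ 2} : Set Eis)) : a ^ 3 = 1 := by
  rcases mem_cubeRoots_iff.mp ha with rfl | rfl | rfl
  · exact one_pow 3
  · exact eisω_pow_three
  · rw [← pow_mul, mul_comm, pow_mul, eisω_pow_three, one_pow]

theorem not_dvd_of_isCoprime_mul {α β γ p : Eis} (h : IsCoprime α (β * γ)) (hp : Prime p)
    (hpα : p ∣ α) : ¬ p ∣ β ∧ ¬ p ∣ γ :=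
  ⟨fun hpβ ↦ hp.not_isUnit (h.isUnit_of_dvd' hpα (dvd_mul_of_dvd_left hpβ γ)),
    fun hpγ ↦ hp.not_isUnit (h.isUnit_of_dvd' hpα (dvd_mul_of_dvd_right hpγ β))⟩

end Eis

namespace IsCubicSymbol

open Eis

variable {χ : Eis → Eis → Eis}

theorem conj_denom (hχ : IsCubicSymbol χ) (m : ℤ) {π : Eis} (hπ : Prime π) (hπ3 : ¬ π ∣ 3)
    (hπm : ¬ π ∣ m) : χ m (conj π) = conj (χ m π) := by
  have hconj3 : ¬ conj π ∣ 3 := by rwa [← map_ofNat conj 3, map_dvd_iff]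
  have hconjm : ¬ conj π ∣ m := by rwa [← map_intCast conj m, map_dvd_iff]
  obtain ⟨hmem, hcong⟩ := hχ.prime_value m π hπ hπ3 hπm
  obtain ⟨hmem', hcong'⟩ :=
    hχ.prime_value m (conj π) ((MulEquiv.prime_iff conj).mpr hπ) hconj3 hconjm
  rw [eisNorm_conj] at hcong'
  have hcong_conj := map_dvd conj hcong
  rw [map_sub, map_pow, map_intCast] at hcong_conj
  exact eq_of_dvd_sub hconj3 hmem' (conj_mem hmem) (by simpa using dvd_sub hcong' hcong_conj)

theorem pow_three_eq_one (hχ : IsCubicSymbol χ) {β α : Eis} (hα : α ≠ 0)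
    (hcop : IsCoprime α (3 * β)) : χ β α ^ 3 = 1 := by
  refine UniqueFactorizationMonoid.of_forall_prime_dvd (P := fun γ ↦ χ β γ ^ 3 = 1)
    (fun u hu ↦ by rw [hχ.unit_denom β u hu, one_pow])
    (fun a b ha hb ↦ by rw [hχ.mul_denom, mul_pow, ha, hb, one_mul]) hα fun p hp hpα ↦ ?_
  obtain ⟨hp3, hpβ⟩ := not_dvd_of_isCoprime_mul hcop hp hpα
  exact pow_three_of_mem (hχ.prime_value β p hp hp3 hpβ).1

theorem mul_conj_denom_eq_one (hχ : IsCubicSymbol χ) (m : ℤ) {α : Eis} (hα : α ≠ 0)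
    (hcop : IsCoprime α (3 * m)) : χ m α * χ m (conj α) = 1 := by
  refine UniqueFactorizationMonoid.of_forall_prime_dvd (P := fun γ ↦ χ m γ * χ m (conj γ) = 1)
    (fun u hu ↦ by rw [hχ.unit_denom m u hu, hχ.unit_denom m _ (hu.map conj), one_mul])
    (fun a b ha hb ↦ ?_) hα fun p hp hpα ↦ ?_
  · rw [map_mul, hχ.mul_denom, hχ.mul_denom]
    linear_combination χ m b * χ m (conj b) * ha + hb
  · obtain ⟨hp3, hpm⟩ := not_dvd_of_isCoprime_mul hcop hp hpα
    rw [hχ.conj_denom m hp hp3 hpm]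
    exact mul_conj_of_mem (hχ.prime_value m p hp hp3 hpm).1

end IsCubicSymbol

/-- For integers `m, n` with `gcd(n, 3m) = 1`, the cubic residue symbol `(m/n)₃`
in the Eisenstein integers equals `1`. -/
theorem stmt_10 (χ : Eis → Eis → Eis) (hχ : IsCubicSymbol χ) (m n : ℤ)
    (h : IsCoprime n (3 * m)) :
    χ (m : Eis) (n : Eis) = 1 := by
  have hn : (n : Eis) ≠ 0 := by
    rw [Int.cast_ne_zero]
    rintro rfl
    rcases Int.isUnit_iff.mp (isCoprime_zero_left.mp h) with h3m | h3m <;> omega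
  have hcop : IsCoprime (n : Eis) (3 * m) := by simpa using h.map (Int.castRingHom Eis)
  have hcube := hχ.pow_three_eq_one hn hcop
  have hsq := hχ.mul_conj_denom_eq_one m hn hcop
  rw [map_intCast] at hsq
  linear_combination hcube - χ m n * hsq

end
end

section
/- Let p ≡ 1 (mod 3) be a rational prime, write p = π·π̄ with π an Eisenstein prime, and let E be an Eisenstein integer coprime to p. Then (E/p)₃ ≡ (E/Ē)^{(p-1)/3} (mod π), where Ē is the complex conjugate of E and (E/p)₃ = (E/π)₃·(E/π̄)₃. -/
open Polynomial

noncomputable section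

lemma eisω_sq : eisω ^ 2 + eisω + 1 = 0 := by
  have h := AdjoinRoot.eval₂_root (X ^ 2 + X + 1 : ℤ[X])
  simpa [eisω] using h

/-- Complex conjugation on the Eisenstein integers, sending `ω` to `ω² = -1 - ω`. -/
noncomputable def eisConj : Eis →+* Eis :=
  AdjoinRoot.lift (Int.castRingHom Eis) (-1 - eisω) (by
    simp only [eval₂_add, eval₂_pow, eval₂_X, eval₂_one]
    linear_combination eisω_sq)

/-!
Reducing modulo `π`, the symbol `(E/π)₃` is `E^{(p-1)/3}`. Conjugating the congruence
`(E/π̄)₃ ≡ E^{(p-1)/3} (mod π̄)` gives `conj (E/π̄)₃ ≡ Ē^{(p-1)/3} (mod π)`, and the conjugate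
of a cube root of unity is its inverse, so `(E/π)₃ (E/π̄)₃ Ē^{(p-1)/3} ≡ (E/π)₃ ≡ E^{(p-1)/3}`.
-/

lemma isCoprime_three_natCast {R : Type*} [CommRing R] {n : ℕ} (hn : n % 3 = 1) :
    IsCoprime (3 : R) n := by
  have h : (3 : R) * (n / 3 : ℕ) + 1 = n := by
    have hdiv := Nat.div_add_mod n 3
    rw [hn] at hdiv
    simpa using congrArg (Nat.cast : ℕ → R) hdiv
  exact ⟨-((n / 3 : ℕ) : R), 1, by linear_combination -h⟩

lemma eisConj_eisω : eisConj eisω = -1 - eisω := AdjoinRoot.lift_root _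

lemma eisConj_eisConj (x : Eis) : eisConj (eisConj x) = x := by
  have : eisConj.toIntAlgHom.comp eisConj.toIntAlgHom = AlgHom.id ℤ Eis := by
    apply AdjoinRoot.algHom_ext
    change eisConj (eisConj eisω) = eisω
    rw [eisConj_eisω, map_sub, map_neg, map_one, eisConj_eisω]
    ring
  exact AlgHom.congr_fun this x

def eisConjAlgEquiv : Eis ≃ₐ[ℤ] Eis :=
  AlgEquiv.ofAlgHom eisConj.toIntAlgHom eisConj.toIntAlgHom
    (AlgHom.ext eisConj_eisConj) (AlgHom.ext eisConj_eisConj)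

lemma Prime.eisConj {π : Eis} (hπ : Prime π) : Prime (eisConj π) :=
  (MulEquiv.prime_iff eisConjAlgEquiv.toMulEquiv).mpr hπ

lemma eisNorm_eisConj (x : Eis) : eisNorm (eisConj x) = eisNorm x :=
  Algebra.norm_eq_of_algEquiv eisConjAlgEquiv x

lemma eisNorm_intCast (n : ℤ) : eisNorm n = n ^ 2 := by
  have hmonic : (X ^ 2 + X + 1 : ℤ[X]).Monic := by monicity!
  have hdeg : (X ^ 2 + X + 1 : ℤ[X]).natDegree = 2 := by compute_degree!
  simpa [eisNorm, hdeg] using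
    Algebra.norm_algebraMap_of_basis (AdjoinRoot.powerBasis' hmonic).basis n

lemma natAbs_eisNorm_of_natCast_eq_mul_eisConj {n : ℕ} {π : Eis}
    (hfac : (n : Eis) = π * eisConj π) : (eisNorm π).natAbs = n := by
  have h := congrArg (fun x => (eisNorm x).natAbs) hfac
  simp only [map_mul, eisNorm_eisConj, Int.natAbs_mul] at h
  rw [← Int.cast_natCast, eisNorm_intCast, Int.natAbs_pow, Int.natAbs_natCast] at h
  exact Nat.pow_left_injective two_ne_zero (show _ ^ 2 = _ ^ 2 by rw [h, sq])

lemma mul_eisConj_self_of_mem_cubeRoots {ζ : Eis}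
    (hζ : ζ ∈ ({1, eisω, eisω ^ 2} : Set Eis)) : ζ * eisConj ζ = 1 := by
  rcases hζ with rfl | rfl | rfl
  · simp
  · rw [eisConj_eisω]; linear_combination -eisω_sq
  · rw [map_pow, eisConj_eisω]; linear_combination (eisω ^ 2 + eisω - 1) * eisω_sq

lemma IsCubicSymbol.dvd_sub_pow {χ : Eis → Eis → Eis} (hχ : IsCubicSymbol χ)
    {n : ℕ} (hn : n % 3 = 1) {π : Eis} (hπ : Prime π) (hfac : (n : Eis) = π * eisConj π)
    {E : Eis} (hE : IsCoprime E n) :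
    χ E π ∈ ({1, eisω, eisω ^ 2} : Set Eis) ∧ π ∣ χ E π - E ^ ((n - 1) / 3) := by
  have hπn : π ∣ n := ⟨eisConj π, hfac⟩
  have hπ3 : ¬ π ∣ 3 := fun h => hπ.not_isUnit ((isCoprime_three_natCast hn).isUnit_of_dvd' h hπn)
  have hπE : ¬ π ∣ E := fun h => hπ.not_isUnit (hE.isUnit_of_dvd' h hπn)
  simpa only [natAbs_eisNorm_of_natCast_eq_mul_eisConj hfac] using
    hχ.prime_value E π hπ hπ3 hπE

theorem stmt_11_general (χ : Eis → Eis → Eis) (hχ : IsCubicSymbol χ)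
    (p : ℕ) (hp3 : p % 3 = 1)
    (π : Eis) (hπ : Prime π) (hfac : (p : Eis) = π * eisConj π)
    (E : Eis) (hE : IsCoprime E (p : Eis)) :
    π ∣ (χ E π * χ E (eisConj π)) * (eisConj E) ^ ((p - 1) / 3) - E ^ ((p - 1) / 3) := by
  have hfac' : (p : Eis) = eisConj π * eisConj (eisConj π) := by
    rw [eisConj_eisConj, mul_comm, hfac]
  obtain ⟨-, hdvd⟩ := hχ.dvd_sub_pow hp3 hπ hfac hE
  obtain ⟨hmem, hdvd'⟩ := hχ.dvd_sub_pow hp3 hπ.eisConj hfac' hE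
  have hconj : π ∣ eisConj (χ E (eisConj π)) - eisConj E ^ ((p - 1) / 3) := by
    simpa only [map_sub, map_pow, eisConj_eisConj] using map_dvd eisConj hdvd'
  have key : χ E π * χ E (eisConj π) * eisConj E ^ ((p - 1) / 3) - E ^ ((p - 1) / 3) =
      (χ E π - E ^ ((p - 1) / 3)) - χ E π * χ E (eisConj π) *
        (eisConj (χ E (eisConj π)) - eisConj E ^ ((p - 1) / 3)) := by
    linear_combination χ E π * mul_eisConj_self_of_mem_cubeRoots hmem
  rw [key]
  exact dvd_sub hdvd (dvd_mul_of_dvd_right hconj _)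

/-- Let `p ≡ 1 (mod 3)` be a rational prime with `p = π·π̄` for an Eisenstein prime
`π`, and let `E` be an Eisenstein integer coprime to `p`.  Then
`(E/p)₃ ≡ (E/Ē)^{(p-1)/3} (mod π)`, where `(E/p)₃ = (E/π)₃·(E/π̄)₃`. -/
theorem stmt_11 (χ : Eis → Eis → Eis) (hχ : IsCubicSymbol χ)
    (p : ℕ) (hp : p.Prime) (hp3 : p % 3 = 1)
    (π : Eis) (hπ : Prime π) (hfac : (p : Eis) = π * eisConj π)
    (E : Eis) (hE : IsCoprime E (p : Eis)) :
    π ∣ (χ E π * χ E (eisConj π)) * (eisConj E) ^ ((p - 1) / 3) - E ^ ((p - 1) / 3) :=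
  stmt_11_general χ hχ p hp3 π hπ hfac E hE

end
end

section
/- If u = A + B√D ∈ S_D and u₂ = (BD² + AD√D)/T where T is the largest integer cube dividing gcd(BD², AD), then u₂ = (√D)³·u/T, N(u₂) = -D³·N(u)/T², N(u₂) is a perfect cube, and u₂ ∈ S_D with C(u₂) = C(u). -/
/-- `A + B√D` is a cube in the ring of integers of `ℚ(√D)`. -/
def IsCubeInO (D A B : ℤ) : Prop :=
  ∃ r s : ℚ, IsIntegral ℤ ((r : ℝ) + (s : ℝ) * Real.sqrt D) ∧
    ((r : ℝ) + (s : ℝ) * Real.sqrt D) ^ 3 = (A : ℝ) + (B : ℝ) * Real.sqrt D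

/-- Membership of `u = A + B√D` in the set `𝒮_D`. -/
def InSD (D A B : ℤ) : Prop :=
  (∃ n : ℤ, A ^ 2 - B ^ 2 * D = n ^ 3) ∧ ¬ IsCubeInO D A B ∧
    ∀ p : ℕ, p.Prime → ¬ (p ^ 3 ∣ Int.gcd A B)

lemma natCast_dvd_gcd_iff {n : ℕ} {a b : ℤ} :
    n ∣ Int.gcd a b ↔ (n : ℤ) ∣ a ∧ (n : ℤ) ∣ b := by
  rw [← Int.natCast_dvd_natCast, Int.coe_gcd, dvd_gcd_iff]

lemma dvd_iff_dvd_of_mul_eq_mul {R : Type*} [CommSemiring R] {q x y u v : R}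
    (hu : IsCoprime q u) (hv : IsCoprime q v) (h : x * u = y * v) : q ∣ x ↔ q ∣ y :=
  ⟨fun hx => hv.dvd_of_dvd_mul_right (h ▸ dvd_mul_of_dvd_left hx u),
    fun hy => hu.dvd_of_dvd_mul_right (h.symm ▸ dvd_mul_of_dvd_left hy v)⟩

lemma exists_eq_pow_three_of_mul_pow_three_eq {x c y : ℤ} (hc : c ≠ 0)
    (h : x * c ^ 3 = y ^ 3) : ∃ k, x = k ^ 3 := by
  obtain ⟨k, rfl⟩ : c ∣ y := (Int.pow_dvd_pow_iff three_ne_zero).mp (Dvd.intro_left x h)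
  refine ⟨k, mul_right_cancel₀ (pow_ne_zero 3 hc) ?_⟩
  rw [h]
  ring

lemma norm_mul_sq_eq_of_mul_eq {R : Type*} [CommRing R] {D A B T a b : R}
    (ha : a * T = B * D ^ 2) (hb : b * T = A * D) :
    (a ^ 2 - b ^ 2 * D) * T ^ 2 = -D ^ 3 * (A ^ 2 - B ^ 2 * D) := by
  linear_combination (a * T + B * D ^ 2) * ha - D * (b * T + A * D) * hb

lemma sqrt_pow_three_mul_add {D : ℝ} (hD : 0 ≤ D) (A B : ℝ) :
    √D ^ 3 * (A + B * √D) = B * D ^ 2 + A * D * √D := by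
  linear_combination (A * √D + B * (√D ^ 2 + D)) * Real.sq_sqrt hD

lemma isIntegral_intCast_add_intCast_mul_sqrt {D : ℤ} (hD : 0 ≤ D) (A B : ℤ) :
    IsIntegral ℤ ((A : ℝ) + (B : ℝ) * √D) := by
  have hsqrt : IsIntegral ℤ (√D) :=
    IsIntegral.of_pow two_pos (by rw [Real.sq_sqrt (Int.cast_nonneg hD)]; exact isIntegral_algebraMap)
  exact isIntegral_algebraMap.add (isIntegral_algebraMap.mul hsqrt)

lemma gcd_ne_zero_of_not_isCubeInO {D A B : ℤ} (h : ¬ IsCubeInO D A B) : Int.gcd A B ≠ 0 := by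
  rw [Ne, Int.gcd_eq_zero_iff]
  rintro ⟨rfl, rfl⟩
  exact h ⟨0, 0, by simpa using isIntegral_zero, by push_cast; ring⟩

lemma IsCubeInO.of_mul_eq_sqrt_pow_three_mul {D A B a b t : ℤ} (hD : 0 < D)
    (h : (t : ℝ) ^ 3 * (a + b * √D) = √D ^ 3 * (A + B * √D)) (hab : IsCubeInO D a b) :
    IsCubeInO D A B := by
  obtain ⟨r, s, -, hw⟩ := hab
  have hDR : (0 : ℝ) < D := Int.cast_pos.mpr hD
  have hroot : (((t * s : ℚ) : ℝ) + ((t * r / D : ℚ) : ℝ) * √D) * √D = t * (r + s * √D) := by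
    push_cast
    field_simp
    linear_combination (t : ℝ) * r * Real.sq_sqrt hDR.le
  have hcube : (((t * s : ℚ) : ℝ) + ((t * r / D : ℚ) : ℝ) * √D) ^ 3 = A + B * √D := by
    refine mul_right_cancel₀ (pow_ne_zero 3 (Real.sqrt_pos.mpr hDR).ne') ?_
    rw [← mul_pow, hroot, mul_pow, hw, h, mul_comm]
  exact ⟨t * s, t * r / D, IsIntegral.of_pow three_pos
    (hcube ▸ isIntegral_intCast_add_intCast_mul_sqrt hD.le A B), hcube⟩

lemma not_prime_pow_three_dvd_gcd_of_mul_eq {X Y a b t : ℤ} (ht : t ≠ 0)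
    (ha : a * t ^ 3 = X) (hb : b * t ^ 3 = Y)
    (hmax : ∀ s : ℤ, s ^ 3 ∣ (Int.gcd X Y : ℤ) → s ^ 3 ∣ t ^ 3) {p : ℕ} (hp : p.Prime) :
    ¬ p ^ 3 ∣ Int.gcd a b := by
  intro hdvd
  obtain ⟨hpa, hpb⟩ := natCast_dvd_gcd_iff.mp hdvd
  push_cast at hpa hpb
  have hpt : ((p : ℤ) * t) ^ 3 ∣ (Int.gcd X Y : ℤ) := by
    rw [mul_pow]
    exact Int.dvd_coe_gcd (ha ▸ mul_dvd_mul_right hpa _) (hb ▸ mul_dvd_mul_right hpb _)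
  have hp1 : (p : ℤ) ^ 3 ∣ 1 := by
    have hpt' := hmax _ hpt
    rw [mul_pow] at hpt'
    exact (mul_dvd_mul_iff_right (pow_ne_zero 3 ht)).mp (by rwa [one_mul])
  have : p ^ 3 = 1 := Nat.dvd_one.mp (Int.natCast_dvd_natCast.mp (by exact_mod_cast hp1))
  exact (Nat.one_lt_pow three_ne_zero hp.one_lt).ne' this

lemma prime_dvd_gcd_iff_of_mul_eq {D A B a b t : ℤ} {q : ℕ} (hq : q.Prime)
    (hqD : ¬ (q : ℤ) ∣ D) (hcubefree : ¬ q ^ 3 ∣ Int.gcd A B)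
    (ha : a * t ^ 3 = B * D ^ 2) (hb : b * t ^ 3 = A * D) :
    q ∣ Int.gcd a b ↔ q ∣ Int.gcd A B := by
  have hqZ : Prime (q : ℤ) := Nat.prime_iff_prime_int.mp hq
  have hcopD : IsCoprime (q : ℤ) D := hqZ.coprime_iff_not_dvd.mpr hqD
  have hcopt : IsCoprime (q : ℤ) (t ^ 3) := by
    refine hqZ.coprime_iff_not_dvd.mpr fun hqt => hcubefree ?_
    have hq3 : (q : ℤ) ^ 3 ∣ t ^ 3 := pow_dvd_pow_of_dvd (hqZ.dvd_of_dvd_pow hqt) 3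
    rw [natCast_dvd_gcd_iff]
    push_cast
    exact ⟨hcopD.pow_left.dvd_of_dvd_mul_right (hq3.trans (Dvd.intro_left b hb)),
      hcopD.pow.dvd_of_dvd_mul_right (hq3.trans (Dvd.intro_left a ha))⟩
  rw [natCast_dvd_gcd_iff, natCast_dvd_gcd_iff, and_comm (a := (q : ℤ) ∣ A)]
  exact and_congr (dvd_iff_dvd_of_mul_eq_mul hcopt hcopD.pow_right ha)
    (dvd_iff_dvd_of_mul_eq_mul hcopt hcopD hb)

lemma Cval_congr {D A B a b : ℤ} (hab : Int.gcd a b ≠ 0) (hAB : Int.gcd A B ≠ 0)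
    (h : ∀ q : ℕ, q.Prime → ¬ (q : ℤ) ∣ D → (q ∣ Int.gcd a b ↔ q ∣ Int.gcd A B)) :
    Cval a b D = Cval A B D := by
  unfold Cval
  congr 1
  ext q
  simp only [Finset.mem_filter, Nat.mem_primeFactors]
  constructor
  · rintro ⟨⟨hq, hdvd, -⟩, hodd, hqD⟩
    exact ⟨⟨hq, (h q hq hqD).mp hdvd, hAB⟩, hodd, hqD⟩
  · rintro ⟨⟨hq, hdvd, -⟩, hodd, hqD⟩
    exact ⟨⟨hq, (h q hq hqD).mpr hdvd, hab⟩, hodd, hqD⟩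

theorem stmt_13_general (D A B T : ℤ) (hD : 1 < D) (hu : InSD D A B)
    (hT0 : 0 < T) (hTcube : ∃ t : ℤ, T = t ^ 3)
    (hTdvd : T ∣ (Int.gcd (B * D ^ 2) (A * D) : ℤ))
    (hTmax : ∀ t : ℤ, t ^ 3 ∣ (Int.gcd (B * D ^ 2) (A * D) : ℤ) → t ^ 3 ∣ T) :
    (((B * D ^ 2 : ℤ) : ℝ) + ((A * D : ℤ) : ℝ) * Real.sqrt D) / (T : ℝ) =
        Real.sqrt D ^ 3 * (((A : ℝ) + (B : ℝ) * Real.sqrt D) / (T : ℝ)) ∧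
      (B * D ^ 2 / T) ^ 2 - (A * D / T) ^ 2 * D = -D ^ 3 * (A ^ 2 - B ^ 2 * D) / T ^ 2 ∧
      (∃ k : ℤ, (B * D ^ 2 / T) ^ 2 - (A * D / T) ^ 2 * D = k ^ 3) ∧
      InSD D (B * D ^ 2 / T) (A * D / T) ∧
      Cval (B * D ^ 2 / T) (A * D / T) D = Cval A B D := by
  obtain ⟨⟨n, hn⟩, hnotcube, hcubefree⟩ := hu
  obtain ⟨t, rfl⟩ := hTcube
  have ht : t ≠ 0 := by rintro rfl; simp at hT0
  have hD0 : 0 < D := by omega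
  set a := B * D ^ 2 / t ^ 3
  set b := A * D / t ^ 3
  have ha : a * t ^ 3 = B * D ^ 2 := Int.ediv_mul_cancel (hTdvd.trans (Int.gcd_dvd_left _ _))
  have hb : b * t ^ 3 = A * D := Int.ediv_mul_cancel (hTdvd.trans (Int.gcd_dvd_right _ _))
  have hu₂ : ((B * D ^ 2 : ℤ) : ℝ) + ((A * D : ℤ) : ℝ) * √D = √D ^ 3 * (A + B * √D) := by
    push_cast
    exact (sqrt_pow_three_mul_add (by positivity) _ _).symm
  have hnorm := norm_mul_sq_eq_of_mul_eq ha hb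
  have hcube : ∃ k, a ^ 2 - b ^ 2 * D = k ^ 3 :=
    exists_eq_pow_three_of_mul_pow_three_eq (pow_ne_zero 2 ht) (y := -(D * n))
      (by rw [hn] at hnorm; linear_combination hnorm)
  have hnotcube₂ : ¬ IsCubeInO D a b := by
    refine fun h => hnotcube (IsCubeInO.of_mul_eq_sqrt_pow_three_mul (t := t) hD0 ?_ h)
    rw [← hu₂, ← ha, ← hb]
    push_cast
    ring
  refine ⟨by rw [← mul_div_assoc, hu₂], by rw [← hnorm, Int.mul_ediv_cancel _ (by positivity)],
    hcube, ⟨hcube, hnotcube₂, fun p hp => not_prime_pow_three_dvd_gcd_of_mul_eq ht ha hb hTmax hp⟩,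
    Cval_congr (gcd_ne_zero_of_not_isCubeInO hnotcube₂) (gcd_ne_zero_of_not_isCubeInO hnotcube)
      fun q hq hqD => prime_dvd_gcd_iff_of_mul_eq hq hqD (hcubefree q hq) ha hb⟩

/-- If `u = A + B√D ∈ 𝒮_D` and `u₂ = (BD² + AD√D)/T` where `T` is the largest
integer cube dividing `gcd(BD², AD)`, then `u₂ = (√D)³·u/T`,
`N(u₂) = -D³·N(u)/T²` is a perfect cube, and `u₂ ∈ 𝒮_D` with `C(u₂) = C(u)`. -/
theorem stmt_13 (D A B T : ℤ) (hD : 1 < D) (hsq : Squarefree D) (hu : InSD D A B)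
    (hT0 : 0 < T) (hTcube : ∃ t : ℤ, T = t ^ 3)
    (hTdvd : T ∣ (Int.gcd (B * D ^ 2) (A * D) : ℤ))
    (hTmax : ∀ t : ℤ, t ^ 3 ∣ (Int.gcd (B * D ^ 2) (A * D) : ℤ) → t ^ 3 ∣ T) :
    (((B * D ^ 2 : ℤ) : ℝ) + ((A * D : ℤ) : ℝ) * Real.sqrt D) / (T : ℝ) =
        Real.sqrt D ^ 3 * (((A : ℝ) + (B : ℝ) * Real.sqrt D) / (T : ℝ)) ∧
      (B * D ^ 2 / T) ^ 2 - (A * D / T) ^ 2 * D = -D ^ 3 * (A ^ 2 - B ^ 2 * D) / T ^ 2 ∧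
      (∃ k : ℤ, (B * D ^ 2 / T) ^ 2 - (A * D / T) ^ 2 * D = k ^ 3) ∧
      InSD D (B * D ^ 2 / T) (A * D / T) ∧
      Cval (B * D ^ 2 / T) (A * D / T) D = Cval A B D :=
  stmt_13_general D A B T hD hu hT0 hTcube hTdvd hTmax
end

section
/- If u ∈ S_D is not a cube in the ring of integers O of ℚ(√D), then u is not a cube in the field K = ℚ(ω, √D), where ω is a primitive cube root of unity; in particular the extension K(u^{1/3})/K has degree 3. -/
/-- The primitive cube root of unity `ω = (-1 + i√3)/2` in `ℂ`. -/
noncomputable def ωC : ℂ := (-1 + Complex.I * Real.sqrt 3) / 2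

/-! Over any field `F`, the polynomial `X³ - u` is irreducible as soon as `u` is not a cube in `F`,
so a cube root of such a `u` generates an extension of degree `3` and cannot lie in an extension
of degree at most `2`. With `F = ℚ(√D)` and `K = F(ω)`, a cube root of `u` in `K` therefore
already lies in `F`, i.e. has the form `r + s√D` with `r, s ∈ ℚ`; as a cube root of the
algebraic integer `u` it is integral, so it lies in `O`. So `u` is not a cube in `K`, and irreducibility of
`X³ - u` over `K` gives `[K(u^{1/3}) : K] = 3`. -/

open Polynomial IntermediateField Module

section
variable {F L : Type*} [Field F] [Field L] [Algebra F L] {α : L}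

theorem finrank_adjoin_cube_root_eq_three {u : F} (hu : ∀ b : F, b ^ 3 ≠ u) {x : L}
    (hx : x ^ 3 = algebraMap F L u) : finrank F F⟮x⟯ = 3 := by
  have hroot : aeval x (X ^ 3 - C u) = 0 := by simp [hx]
  have hmon : (X ^ 3 - C u).Monic := monic_X_pow_sub_C u three_ne_zero
  rw [adjoin.finrank ⟨_, hmon, hroot⟩, ← minpoly.eq_of_irreducible_of_monic
    (X_pow_sub_C_irreducible_of_prime Nat.prime_three hu) hroot hmon, natDegree_X_pow_sub_C]

theorem finrank_adjoin_simple_le_natDegree {p : F[X]} (hp : p ≠ 0)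
    (hα : aeval α p = 0) : finrank F F⟮α⟯ ≤ p.natDegree := by
  rw [adjoin.finrank (IsAlgebraic.isIntegral ⟨p, hp, hα⟩)]
  exact natDegree_le_natDegree (minpoly.degree_le_of_ne_zero F α hp hα)

theorem exists_cube_eq_of_mem_adjoin_simple (hα : IsIntegral F α) (hdeg : finrank F F⟮α⟯ ≤ 2)
    {u : F} {z : L} (hz : z ∈ F⟮α⟯) (hz3 : z ^ 3 = algebraMap F L u) : ∃ b : F, b ^ 3 = u := by
  by_contra! h
  have : FiniteDimensional F F⟮α⟯ := adjoin.finiteDimensional hα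
  have hle := finrank_le_of_le_right (adjoin_simple_le_iff.mpr hz)
  have hz_deg := finrank_adjoin_cube_root_eq_three h hz3
  omega

theorem exists_eq_add_mul_of_mem_adjoin_simple (hα : IsIntegral F α)
    (hdeg : finrank F F⟮α⟯ ≤ 2) (w : F⟮α⟯) :
    ∃ r s : F, (w : L) = algebraMap F L r + algebraMap F L s * α := by
  obtain ⟨f, hfdeg, rfl⟩ := (adjoin.powerBasis hα).exists_eq_aeval w
  rw [adjoin.powerBasis_dim, ← adjoin.finrank hα] at hfdeg
  refine ⟨f.coeff 0, f.coeff 1, ?_⟩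
  rw [eq_X_add_C_of_natDegree_le_one (by omega : f.natDegree ≤ 1)]
  simp [add_comm]
end

theorem ωC_sq_add_ωC_add_one : ωC ^ 2 + ωC + 1 = 0 := by
  have h3 : ((√3 : ℝ) : ℂ) ^ 2 = 3 := by
    rw [← Complex.ofReal_pow, Real.sq_sqrt (by norm_num)]; norm_num
  rw [ωC]
  linear_combination (Complex.I ^ 2 / 4) * h3 + (3/4 : ℂ) * Complex.I_sq

theorem isIntegral_and_finrank_adjoin_ωC_le_two (F : Type*) [Field F] [Algebra F ℂ] :
    IsIntegral F ωC ∧ finrank F F⟮ωC⟯ ≤ 2 := by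
  have hp : (X ^ 2 + X + 1 : F[X]).natDegree = 2 := by compute_degree!
  have hroot : aeval ωC (X ^ 2 + X + 1 : F[X]) = 0 := by simpa using ωC_sq_add_ωC_add_one
  have hp0 : (X ^ 2 + X + 1 : F[X]) ≠ 0 := ne_zero_of_natDegree_gt (hp ▸ two_pos)
  exact ⟨IsAlgebraic.isIntegral ⟨_, hp0, hroot⟩,
    hp ▸ finrank_adjoin_simple_le_natDegree hp0 hroot⟩

theorem isIntegral_and_finrank_adjoin_le_two_of_sq_eq {F L : Type*} [Field F] [Field L]
    [Algebra F L] {d : L} {e : F} (hd : d ^ 2 = algebraMap F L e) :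
    IsIntegral F d ∧ finrank F F⟮d⟯ ≤ 2 := by
  have hroot : aeval d (X ^ 2 - C e) = 0 := by simp [hd]
  have hp0 : (X ^ 2 - C e : F[X]) ≠ 0 := X_pow_sub_C_ne_zero two_pos e
  exact ⟨IsAlgebraic.isIntegral ⟨_, hp0, hroot⟩,
    natDegree_X_pow_sub_C (n := 2) (r := e) ▸ finrank_adjoin_simple_le_natDegree hp0 hroot⟩

theorem exists_rat_cube_eq_of_mem_adjoin_ωC {d : ℂ} {e : ℚ} (hd : d ^ 2 = e) {a b : ℚ} {z : ℂ}
    (hz : z ∈ ℚ⟮ωC, d⟯) (hz3 : z ^ 3 = a + b * d) :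
    ∃ r s : ℚ, ((r : ℂ) + s * d) ^ 3 = a + b * d := by
  obtain ⟨hd_int, hd_deg⟩ :=
    isIntegral_and_finrank_adjoin_le_two_of_sq_eq (d := d) (e := e) (by rwa [eq_ratCast])
  obtain ⟨hω_int, hω_deg⟩ := isIntegral_and_finrank_adjoin_ωC_le_two ℚ⟮d⟯
  have hu : (a : ℂ) + b * d ∈ ℚ⟮d⟯ :=
    add_mem (SubfieldClass.ratCast_mem _ a)
      (mul_mem (SubfieldClass.ratCast_mem _ b) (mem_adjoin_simple_self ℚ d))
  rw [Set.pair_comm, ← adjoin_simple_adjoin_simple, mem_restrictScalars] at hz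
  obtain ⟨w, hw⟩ := exists_cube_eq_of_mem_adjoin_simple hω_int hω_deg (u := ⟨_, hu⟩) hz hz3
  obtain ⟨r, s, hrs⟩ := exists_eq_add_mul_of_mem_adjoin_simple hd_int hd_deg w
  refine ⟨r, s, ?_⟩
  rw [eq_ratCast, eq_ratCast] at hrs
  rw [← hrs, ← IntermediateField.coe_pow, hw]

theorem isCubeInO_of_cube_eq {D A B : ℤ} (hD : 0 ≤ D) {r s : ℚ}
    (h : ((r : ℝ) + s * √D) ^ 3 = A + B * √D) : IsCubeInO D A B := by
  have hsqrt : IsIntegral ℤ √(D : ℝ) :=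
    IsIntegral.of_pow two_pos
      (by rw [Real.sq_sqrt (by exact_mod_cast hD)]; exact isIntegral_algebraMap)
  have hu : IsIntegral ℤ ((A : ℝ) + B * √D) :=
    isIntegral_algebraMap.add (isIntegral_algebraMap.mul hsqrt)
  exact ⟨r, s, IsIntegral.of_pow three_pos (h ▸ hu), h⟩

theorem not_exists_cube_mem_adjoin_ωC_sqrt {D A B : ℤ} (hD : 0 ≤ D) (h : ¬ IsCubeInO D A B) :
    ¬ ∃ z ∈ ℚ⟮ωC, ((√D : ℝ) : ℂ)⟯, z ^ 3 = A + B * ((√D : ℝ) : ℂ) := by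
  rintro ⟨z, hz, hz3⟩
  have hd : ((√D : ℝ) : ℂ) ^ 2 = ((D : ℚ) : ℂ) := by
    rw [← Complex.ofReal_pow, Real.sq_sqrt (by exact_mod_cast hD)]; push_cast; rfl
  obtain ⟨r, s, hrs⟩ := exists_rat_cube_eq_of_mem_adjoin_ωC (a := A) (b := B) hd hz
    (by push_cast; exact hz3)
  exact h (isCubeInO_of_cube_eq hD (Complex.ofReal_injective (by push_cast at hrs ⊢; exact hrs)))

theorem stmt_17_general (D A B : ℤ) (hD : 1 < D) (hu : InSD D A B) :
    letI K : IntermediateField ℚ ℂ :=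
      IntermediateField.adjoin ℚ ({ωC, ((Real.sqrt D : ℝ) : ℂ)} : Set ℂ)
    (¬ ∃ z : ℂ, z ∈ K ∧ z ^ 3 = ((A : ℂ) + (B : ℂ) * ((Real.sqrt D : ℝ) : ℂ))) ∧
      ∀ v : ℝ, v ^ 3 = (A : ℝ) + (B : ℝ) * Real.sqrt D →
        Module.finrank K (IntermediateField.adjoin K ({(v : ℂ)} : Set ℂ)) = 3 := by
  have hnot := not_exists_cube_mem_adjoin_ωC_sqrt (by omega) hu.2.1
  set K : IntermediateField ℚ ℂ := ℚ⟮ωC, ((√D : ℝ) : ℂ)⟯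
  refine ⟨hnot, fun v hv => ?_⟩
  have huK : (A : ℂ) + B * ((√D : ℝ) : ℂ) ∈ K :=
    add_mem (intCast_mem _ A) (mul_mem (intCast_mem _ B) (subset_adjoin _ _ (by simp)))
  refine finrank_adjoin_cube_root_eq_three (u := (⟨_, huK⟩ : K))
    (fun b hb => hnot ⟨b, b.2, by rw [← IntermediateField.coe_pow, hb]⟩) ?_
  rw [IntermediateField.algebraMap_apply, ← Complex.ofReal_pow, hv]
  push_cast
  rfl

/-- If `u = A + B√D ∈ 𝒮_D` is not a cube in the ring of integers of `ℚ(√D)`, then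
`u` is not a cube in `K = ℚ(ω, √D)`, and the extension `K(u^{1/3})/K` obtained by
adjoining the real cube root of `u` has degree `3`. -/
theorem stmt_17 (D A B : ℤ) (hD : 1 < D) (hsq : Squarefree D) (hu : InSD D A B) :
    letI K : IntermediateField ℚ ℂ :=
      IntermediateField.adjoin ℚ ({ωC, ((Real.sqrt D : ℝ) : ℂ)} : Set ℂ)
    (¬ ∃ z : ℂ, z ∈ K ∧ z ^ 3 = ((A : ℂ) + (B : ℂ) * ((Real.sqrt D : ℝ) : ℂ))) ∧
      ∀ v : ℝ, v ^ 3 = (A : ℝ) + (B : ℝ) * Real.sqrt D →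
        Module.finrank K (IntermediateField.adjoin K ({(v : ℂ)} : Set ℂ)) = 3 :=
  stmt_17_general D A B hD hu
end

section
/- Let A, B, C, Q, a, b, c, d, x, y be integers with d = b² - ac = -27C²D, f = ax² + 2bxy + cy², α = A/Q, β = B/(CQ) integers with gcd(α, β) = 1, γ = gcd(y, β), β₁ = β/γ, y₁ = y/γ. Then with M = β₁(ax+by) - 3y₁α(1+2ω) in ℤ[ω], one has γ²·N(M) = β²(ax+by)² + 27y²α², and consequently N(M) ≡ 27y₁²·(A² - B²D)/Q² (mod a·f). -/
/-!
Since `(1 + 2ω)² = -3`, the norm of `u - v(1 + 2ω)` is `u² + 3v²`. The norm is computed by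
identifying `ℤ[X]/(X² + X + 1)` with `QuadraticAlgebra ℤ (-1) (-1)` (so `ω² = -1 - ω`), where the
determinant of multiplication by `r + sω` is known to be `r² - rs + s²`. The congruence then comes from `a·f = (ax + by)² - d·y²` together
with `d = -27C²D`.
-/

open Polynomial

noncomputable section

lemma eisω_mul_eisω : eisω * eisω = (-1 : ℤ) • 1 + (-1 : ℤ) • eisω := by
  have h := AdjoinRoot.eval₂_root (X ^ 2 + X + 1 : ℤ[X])
  simp only [eval₂_add, eval₂_X_pow, eval₂_X, eval₂_one] at h
  rw [eisω]
  linear_combination h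

open QuadraticAlgebra in
def eisEquivQuadraticAlgebra : Eis ≃ₐ[ℤ] QuadraticAlgebra ℤ (-1) (-1) :=
  AlgEquiv.ofAlgHom
    (AdjoinRoot.liftAlgHom _ (Algebra.ofId ℤ _) ω (by simp [omega_mul_omega_eq_add, sq]))
    (QuadraticAlgebra.lift ⟨eisω, eisω_mul_eisω⟩)
    (QuadraticAlgebra.algHom_ext <| by simp [eisω])
    (AdjoinRoot.algHom_ext <| by simp [eisω])

lemma eisNorm_eq_quadraticAlgebra_norm (z : Eis) :
    eisNorm z = (eisEquivQuadraticAlgebra z).norm := by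
  rw [eisNorm, ← Algebra.norm_eq_of_algEquiv eisEquivQuadraticAlgebra,
    Algebra.norm_apply, ← QuadraticAlgebra.det_toLinearMap_eq_norm]
  rfl

lemma eisNorm_intCast_add_intCast_mul_eisω (r s : ℤ) :
    eisNorm (r + s * eisω) = r ^ 2 - r * s + s ^ 2 := by
  have h : eisEquivQuadraticAlgebra (r + s * eisω) = ⟨r, s⟩ := by
    ext <;> simp [eisEquivQuadraticAlgebra, eisω]
  rw [eisNorm_eq_quadraticAlgebra_norm, h, QuadraticAlgebra.norm_def]
  ring

lemma eisNorm_intCast_sub_intCast_mul_one_add_two_mul_eisω (u v : ℤ) :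
    eisNorm (u - v * (1 + 2 * eisω)) = u ^ 2 + 3 * v ^ 2 := by
  rw [show (u : Eis) - v * (1 + 2 * eisω) = ((u - v : ℤ) : Eis) + ((-(2 * v) : ℤ) : Eis) * eisω by
    push_cast; ring, eisNorm_intCast_add_intCast_mul_eisω]
  ring

theorem stmt_19_general (C D a b c d x y f α β γ β₁ y₁ : ℤ)
    (hd : d = b ^ 2 - a * c) (hd' : d = -27 * C ^ 2 * D)
    (hf : f = a * x ^ 2 + 2 * b * x * y + c * y ^ 2)
    (hβ₁ : β = γ * β₁) (hy₁ : y = γ * y₁) :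
    ∀ M : Eis, M = (β₁ : Eis) * ((a : Eis) * x + b * y) -
        3 * (y₁ : Eis) * (α : Eis) * (1 + 2 * eisω) →
      γ ^ 2 * eisNorm M = β ^ 2 * (a * x + b * y) ^ 2 + 27 * y ^ 2 * α ^ 2 ∧
        (a * f) ∣ (eisNorm M - 27 * y₁ ^ 2 * (α ^ 2 - β ^ 2 * C ^ 2 * D)) := by
  intro M hM
  have hN : eisNorm M = β₁ ^ 2 * (a * x + b * y) ^ 2 + 27 * y₁ ^ 2 * α ^ 2 := by
    have h := eisNorm_intCast_sub_intCast_mul_one_add_two_mul_eisω (β₁ * (a * x + b * y)) (3 * y₁ * α)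
    push_cast at h
    rw [hM, h]
    ring
  subst hβ₁ hy₁
  refine ⟨by rw [hN]; ring, β₁ ^ 2, ?_⟩
  -- `a * f = (a * x + b * y) ^ 2 - d * y ^ 2`
  rw [hN, hf]
  linear_combination γ ^ 2 * y₁ ^ 2 * β₁ ^ 2 * (hd.symm.trans hd')

/-- Let `d = b² - ac = -27C²D`, `f = ax² + 2bxy + cy²`, `α = A/Q`, `β = B/(CQ)`
with `gcd(α, β) = 1`, `γ = gcd(y, β)`, `β₁ = β/γ`, `y₁ = y/γ`.  Then for
`M = β₁(ax + by) - 3y₁α(1 + 2ω)` in `ℤ[ω]` one has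
`γ²·N(M) = β²(ax + by)² + 27y²α²`, and consequently
`N(M) ≡ 27y₁²·(A² - B²D)/Q² (mod a·f)`. -/
theorem stmt_19 (A B C D Q a b c d x y f α β γ β₁ y₁ : ℤ)
    (hD : 0 < D) (hd : d = b ^ 2 - a * c) (hd' : d = -27 * C ^ 2 * D)
    (hf : f = a * x ^ 2 + 2 * b * x * y + c * y ^ 2)
    (hα : A = Q * α) (hβ : B = C * Q * β) (hαβ : IsCoprime α β)
    (hγ : γ = (Int.gcd y β : ℤ)) (hβ₁ : β = γ * β₁) (hy₁ : y = γ * y₁)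
    (hγf : IsCoprime γ (a * f)) :
    ∀ M : Eis, M = (β₁ : Eis) * ((a : Eis) * x + b * y) -
        3 * (y₁ : Eis) * (α : Eis) * (1 + 2 * eisω) →
      γ ^ 2 * eisNorm M = β ^ 2 * (a * x + b * y) ^ 2 + 27 * y ^ 2 * α ^ 2 ∧
        (a * f) ∣ (eisNorm M - 27 * y₁ ^ 2 * (α ^ 2 - β ^ 2 * C ^ 2 * D)) :=
  stmt_19_general C D a b c d x y f α β γ β₁ y₁ hd hd' hf hβ₁ hy₁

end
end
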